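/- arXiv:1707.09324 — 2 statements merged into one kernel-verified Lean document; each statement's English description precedes it below -/
import Mathlib

section
/- For an argumentation framework AF, the coherent ternary distributions are exactly the ternary distributions that are both protective and strict: P_COH(AF) ∩ P_TER(AF) = P_PRO(AF) ∩ P_STC(AF) ∩ P_TER(AF). -/
variable {α : Type*}

/-- Coherent (COH). -/
def Coherent (att : α → α → Prop) (P : α → ℝ) : Prop :=
  ∀ a b, att a b → P a ≤ 1 - P b

/-- Protective (PRO). -/
def Protective (att : α → α → Prop) (P : α → ℝ) : Prop :=
  ∀ a b, att a b → 1/2 < P b → P a < 1/2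

/-- Strict (STC). -/
def Strict (att : α → α → Prop) (P : α → ℝ) : Prop :=
  ∀ a b, att a b → 1/2 < P a → P b < 1/2

/-- Ternary (TER). -/
def Ternary (P : α → ℝ) : Prop :=
  ∀ a, P a = 0 ∨ P a = 1/2 ∨ P a = 1

theorem coherent_ternary_eq_protective_strict_ternary (att : α → α → Prop) :
    {P : α → ℝ | (∀ a, 0 ≤ P a ∧ P a ≤ 1) ∧ Coherent att P} ∩
        {P : α → ℝ | (∀ a, 0 ≤ P a ∧ P a ≤ 1) ∧ Ternary P} =
      {P : α → ℝ | (∀ a, 0 ≤ P a ∧ P a ≤ 1) ∧ Protective att P} ∩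
        {P : α → ℝ | (∀ a, 0 ≤ P a ∧ P a ≤ 1) ∧ Strict att P} ∩
        {P : α → ℝ | (∀ a, 0 ≤ P a ∧ P a ≤ 1) ∧ Ternary P} := by
  ext P
  simp only [Set.mem_inter_iff, Set.mem_setOf_eq]
  constructor
  · rintro ⟨⟨hb, hcoh⟩, _, hter⟩
    refine ⟨⟨⟨hb, ?_⟩, hb, ?_⟩, hb, hter⟩
    · intro a b hab hbg
      have := hcoh a b hab; linarith
    · intro a b hab hag
      have := hcoh a b hab; linarith
  · rintro ⟨⟨⟨hb, hpro⟩, _, hstc⟩, _, hter⟩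
    refine ⟨⟨hb, ?_⟩, hb, hter⟩
    intro a b hab
    rcases hter a with ha | ha | ha <;> rcases hter b with hbb | hbb | hbb <;>
      try linarith
    · exfalso; have := hpro a b hab (by linarith); linarith
    · exfalso; have := hstc a b hab (by linarith); linarith
    · exfalso; have := hstc a b hab (by linarith); linarith
end

section
/- For an argumentation framework AF, every involutary and founded distribution is demanding: P_INV(AF) ∩ P_FOU(AF) ⊆ P_DEM(AF). -/
variable {α : Type*}

/-- An argument is initial if it has no attackers. -/
def Initial (att : α → α → Prop) (a : α) : Prop := ∀ b, ¬ att b a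

/-- Involutary (INV). -/
def Involutary (att : α → α → Prop) (P : α → ℝ) : Prop :=
  ∀ a b, att a b → P a = 1 - P b

/-- Founded (FOU). -/
def Founded (att : α → α → Prop) (P : α → ℝ) : Prop :=
  ∀ a, Initial att a → P a = 1

/-- Demanding (DEM). -/
def Demanding (att : α → α → Prop) (P : α → ℝ) : Prop :=
  (∀ a, P a = 1 → ∀ b, att b a → P b = 0) ∧
  (∀ a, P a = 0 → ∃ b, att b a ∧ P b = 1)

theorem involutary_founded_subset_demanding (att : α → α → Prop) :
    {P : α → ℝ | (∀ a, 0 ≤ P a ∧ P a ≤ 1) ∧ Involutary att P} ∩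
        {P : α → ℝ | (∀ a, 0 ≤ P a ∧ P a ≤ 1) ∧ Founded att P} ⊆
      {P : α → ℝ | (∀ a, 0 ≤ P a ∧ P a ≤ 1) ∧ Demanding att P} := by
  rintro P ⟨⟨hbd, hinv⟩, ⟨-, hfou⟩⟩
  refine ⟨hbd, ?_, ?_⟩
  · intro a ha b hb
    have := hinv b a hb
    rw [ha] at this
    linarith
  · intro a ha
    by_cases h : Initial att a
    · exact absurd (hfou a h) (by rw [ha]; norm_num)
    · simp only [Initial, not_forall, not_not] at h
      obtain ⟨b, hb⟩ := h
      exact ⟨b, hb, by have := hinv b a hb; rw [ha] at this; linarith⟩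
end
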